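/- In Dijkstra's algorithm with the invariants that δ(u) = d(x,u) for all u in the finalized set Q, that δ(u) ≤ δ(v) for all u ∈ Q and v ∉ Q, and that δ(v) ≤ ℓ(π) for every Q-path π from x to v, the vertex y = argmin over v ∉ Q of δ(v) satisfies δ(y) = d(x,y). -/

import Mathlib

open scoped ENNReal

/-- Weighted length of a walk: sum of the weights of its edges. -/
noncomputable def wlen {V : Type*} {G : SimpleGraph V} (w : Sym2 V → NNReal) {u v : V}
    (p : G.Walk u v) : ℝ≥0∞ :=
  (p.edges.map (fun e => ((w e : NNReal) : ℝ≥0∞))).sum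

/-- Shortest-path distance between two vertices (∞ if no path exists). -/
noncomputable def wdist {V : Type*} (G : SimpleGraph V) (w : Sym2 V → NNReal) (x y : V) : ℝ≥0∞ :=
  ⨅ (p : {p : G.Walk x y // p.IsPath}), wlen w p.1

/-- Distance from a vertex to a cycle: minimum distance to a vertex of the cycle. -/
noncomputable def dcyc {V : Type*} (G : SimpleGraph V) (w : Sym2 V → NNReal) (x : V) {a : V}
    (c : G.Walk a a) : ℝ≥0∞ :=
  ⨅ y ∈ c.support, wdist G w x y

/-!
Every path `p` from `x` to `y ∉ Q` leaves `Q` somewhere; cutting `p` at the first vertex `u ∉ Q`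
gives a `Q`-path `q` to `u`, and by minimality of `y`,
`δ y ≤ δ u ≤ ℓ(q) ≤ ℓ(p)`. Taking the infimum over `p` gives `δ y ≤ d(x, y)`; the reverse
inequality is assumed.
-/

namespace SimpleGraph.Walk

variable {V : Type*} {G : SimpleGraph V}

theorem exists_append_at_first_not (P : V → Prop) {u v : V} (p : G.Walk u v) (hv : ¬ P v) :
    ∃ a, ¬ P a ∧ ∃ (q : G.Walk u a) (r : G.Walk a v),
      q.append r = p ∧ ∀ z ∈ q.support.dropLast, P z := by
  induction p with
  | nil => exact ⟨_, hv, nil, nil, rfl, by simp⟩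
  | @cons u b v h p ih =>
    by_cases hu : P u
    · obtain ⟨a, ha, q, r, rfl, hq⟩ := ih hv
      refine ⟨a, ha, cons h q, r, rfl, ?_⟩
      rw [support_cons, List.dropLast_cons_of_ne_nil q.support_ne_nil]
      rintro z (_ | ⟨_, hz⟩)
      exacts [hu, hq z hz]
    · exact ⟨u, hu, nil, cons h p, rfl, by simp⟩

end SimpleGraph.Walk

lemma wlen_append {V : Type*} {G : SimpleGraph V} (w : Sym2 V → NNReal) {u v t : V}
    (p : G.Walk u v) (q : G.Walk v t) :
    wlen w (p.append q) = wlen w p + wlen w q := by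
  simp [wlen, SimpleGraph.Walk.edges_append]

theorem stmt12_general {V : Type*} (G : SimpleGraph V) (w : Sym2 V → NNReal)
    (x : V) (Q : Set V) (δ : V → ℝ≥0∞)
    (h3 : ∀ (v : V) (p : G.Walk x v), p.IsPath →
      (∀ u ∈ p.support.dropLast, u ∈ Q) → δ v ≤ wlen w p)
    (h4 : ∀ v : V, wdist G w x v ≤ δ v)
    (y : V) (hy : y ∉ Q) (hmin : ∀ v ∉ Q, δ y ≤ δ v) :
    δ y = wdist G w x y := by
  refine le_antisymm (le_iInf fun ⟨p, hp⟩ => ?_) (h4 y)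
  obtain ⟨u, hu, q, r, rfl, hq⟩ := p.exists_append_at_first_not (· ∈ Q) hy
  calc δ y ≤ δ u := hmin u hu
    _ ≤ wlen w q := h3 u q hp.of_append_left hq
    _ ≤ wlen w (q.append r) := by rw [wlen_append]; exact le_self_add

/-- under the standard Dijkstra invariants, the vertex y minimizing δ over
V ∖ Q satisfies δ(y) = d(x,y). A Q-path is a simple path from x all of whose vertices except
possibly the last lie in Q. -/
theorem stmt12 {V : Type*} [Fintype V] (G : SimpleGraph V) (w : Sym2 V → NNReal)
    (hw : ∀ e ∈ G.edgeSet, 0 < w e) (x : V) (Q : Set V) (δ : V → ℝ≥0∞)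
    (h1 : ∀ u ∈ Q, δ u = wdist G w x u)
    (h2 : ∀ u ∈ Q, ∀ v ∉ Q, δ u ≤ δ v)
    (h3 : ∀ (v : V) (p : G.Walk x v), p.IsPath →
      (∀ u ∈ p.support.dropLast, u ∈ Q) → δ v ≤ wlen w p)
    (h4 : ∀ v : V, wdist G w x v ≤ δ v)
    (y : V) (hy : y ∉ Q) (hmin : ∀ v ∉ Q, δ y ≤ δ v) :
    δ y = wdist G w x y :=
  stmt12_general G w x Q δ h3 h4 y hy hmin
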